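/- Let P* be a probability measure on ℝ^d supported on the union of two sets M₁ and M₂ with dist(M₁, M₂) ≥ 2D (so the ball of radius D centered at any point equidistant from both sets misses the support), and suppose P*(B_{D, F⁻¹(0)}) = 0 where F : ℝ^d → ℝ^d is a bijection with L₂-Lipschitz inverse. Let P̂(A) = Q(F(A)) with Q the standard Gaussian. Then D_TV(P*, P̂) ≥ γ(d/2, D²/(2L₂²))/Γ(d/2). -/

import Mathlib

/-!
Since `F⁻¹` is `L₂`-Lipschitz, `F` maps the `P*`-null ball `B(F⁻¹ 0, D)` onto a set containing
`B(0, D / L₂)`, so `P̂` gives that ball at least the Gaussian mass of `B(0, D / L₂)`. In polar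
coordinates, with the substitution `t = r² / 2`, this mass is `γ(d/2, D² / (2 L₂²)) / Γ(d/2)`, and the
total variation distance is at least the discrepancy of `P*` and `P̂` on this one set.
-/

open MeasureTheory Metric Real

noncomputable section

abbrev E (d : ℕ) := EuclideanSpace ℝ (Fin d)

def stdGaussian (d : ℕ) : Measure (E d) :=
  volume.withDensity (fun z => ENNReal.ofReal ((2 * π) ^ (-(d : ℝ) / 2) * Real.exp (-‖z‖ ^ 2 / 2)))

def tvDist {Ω : Type*} [MeasurableSpace Ω] (P Q : Measure Ω) : ℝ :=
  ⨆ A : {s : Set Ω // MeasurableSet s}, |(P A.1).toReal - (Q A.1).toReal|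

def lowerIncGamma (s x : ℝ) : ℝ := ∫ t in (0 : ℝ)..x, t ^ (s - 1) * Real.exp (-t)

open Set Module

lemma image_sq_div_two_Ioc {R : ℝ} (hR : 0 ≤ R) :
    (fun y : ℝ => y ^ 2 / 2) '' Ioc 0 R = Ioc 0 (R ^ 2 / 2) := by
  ext t
  constructor
  · rintro ⟨y, ⟨hy0, hyR⟩, rfl⟩
    exact ⟨by positivity, show y ^ 2 / 2 ≤ R ^ 2 / 2 by gcongr⟩
  · rintro ⟨ht0, htR⟩
    refine ⟨√(2 * t), ⟨by positivity, ?_⟩, ?_⟩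
    · rw [sqrt_le_left hR]; linarith
    · simp only [sq_sqrt (by positivity : (0:ℝ) ≤ 2 * t)]; ring

lemma two_rpow_mul_mul_sq_div_two_rpow {y : ℝ} (hy : 0 < y) (s : ℝ) :
    2 ^ (s - 1) * (y * (y ^ 2 / 2) ^ (s - 1)) = y ^ (2 * s - 1) := by
  have hy' : y ^ (2 * s - 1) = y ^ ((2 : ℕ) * (s - 1)) * y := by
    rw [← rpow_add_one hy.ne']; push_cast; ring_nf
  rw [div_rpow (by positivity) zero_le_two, ← rpow_natCast, ← rpow_mul hy.le, hy']
  field_simp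

lemma setIntegral_Ioc_rpow_mul_exp_neg_sq_div_two (s : ℝ) {R : ℝ} (hR : 0 ≤ R) :
    ∫ y in Ioc 0 R, y ^ (2 * s - 1) * exp (-y ^ 2 / 2)
      = 2 ^ (s - 1) * lowerIncGamma s (R ^ 2 / 2) := by
  have hinj : InjOn (fun y : ℝ => y ^ 2 / 2) (Ioc 0 R) := fun x hx y hy hxy =>
    (pow_left_inj₀ hx.1.le hy.1.le two_ne_zero).1 (by simpa using hxy)
  have hsubst := integral_image_eq_integral_abs_deriv_smul measurableSet_Ioc
    (fun y _ => ((hasDerivAt_pow 2 y).div_const 2).hasDerivWithinAt) hinj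
    (fun t => t ^ (s - 1) * exp (-t))
  rw [image_sq_div_two_Ioc hR] at hsubst
  rw [lowerIncGamma, intervalIntegral.integral_of_le (by positivity), hsubst,
    ← integral_const_mul]
  refine setIntegral_congr_fun measurableSet_Ioc fun y hy => ?_
  have hy0 : 0 < y := hy.1
  have hjac : |(2 : ℕ) * y ^ (2 - 1) / 2| = y := by norm_num [abs_of_pos hy0]
  rw [smul_eq_mul, hjac, neg_div, ← mul_assoc y, ← mul_assoc, two_rpow_mul_mul_sq_div_two_rpow hy0]

lemma setIntegral_closedBall_fun_norm {V F : Type*} [NormedAddCommGroup V] [NormedSpace ℝ V]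
    [FiniteDimensional ℝ V] [Nontrivial V] [MeasurableSpace V] [BorelSpace V] (μ : Measure V)
    [μ.IsAddHaarMeasure] [NormedAddCommGroup F] [NormedSpace ℝ F] (f : ℝ → F) (R : ℝ) :
    ∫ x in closedBall 0 R, f ‖x‖ ∂μ
      = finrank ℝ V • μ.real (ball 0 1) • ∫ y in Ioc 0 R, y ^ (finrank ℝ V - 1) • f y := by
  have hind : (closedBall (0 : V) R).indicator (fun x => f ‖x‖) = fun x => (Iic R).indicator f ‖x‖ := by
    ext x
    by_cases hx : ‖x‖ ≤ R <;> simp [hx]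
  have hind' : (fun y : ℝ => y ^ (finrank ℝ V - 1) • (Iic R).indicator f y)
      = (Iic R).indicator fun y => y ^ (finrank ℝ V - 1) • f y := by
    ext y
    by_cases hy : y ≤ R <;> simp [hy]
  rw [← integral_indicator measurableSet_closedBall, hind, integral_fun_norm_addHaar, hind',
    setIntegral_indicator measurableSet_Iic, Ioi_inter_Iic]

lemma two_pi_rpow_mul_volume_ball_mul_eq_inv_Gamma {d : ℕ} (hd : 1 ≤ d) :
    (2 * π) ^ (-(d : ℝ) / 2) * (d * volume.real (ball (0 : E d) 1)) * 2 ^ ((d : ℝ) / 2 - 1)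
      = (Gamma ((d : ℝ) / 2))⁻¹ := by
  have : Nonempty (Fin d) := ⟨⟨0, hd⟩⟩
  have hvol : volume.real (ball (0 : E d) 1) = π ^ ((d : ℝ) / 2) / ((d / 2) * Gamma (d / 2)) := by
    rw [measureReal_def, EuclideanSpace.volume_ball, Fintype.card_fin, ENNReal.ofReal_one, one_pow,
      one_mul, ENNReal.toReal_ofReal (by positivity), ← Gamma_add_one (by positivity),
      sqrt_eq_rpow, ← rpow_natCast, ← rpow_mul pi_pos.le]
    ring_nf
  rw [hvol, neg_div, rpow_neg (by positivity), mul_rpow zero_le_two pi_pos.le,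
    rpow_sub_one two_ne_zero]
  have := (Gamma_pos_of_pos (by positivity : (0 : ℝ) < d / 2)).ne'
  have := (rpow_pos_of_pos pi_pos ((d : ℝ) / 2)).ne'
  have := (rpow_pos_of_pos zero_lt_two ((d : ℝ) / 2)).ne'
  field_simp

lemma integral_exp_neg_sq_norm_div_two (d : ℕ) :
    ∫ z : E d, exp (-‖z‖ ^ 2 / 2) = (2 * π) ^ ((d : ℝ) / 2) := by
  simpa [neg_div, div_eq_inv_mul, finrank_euclideanSpace] using
    GaussianFourier.integral_rexp_neg_mul_sq_norm (V := E d) (b := 1 / 2) (by norm_num)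

instance (d : ℕ) : IsFiniteMeasure (stdGaussian d) := by
  refine isFiniteMeasure_withDensity_ofReal (Integrable.const_mul ?_ _).hasFiniteIntegral
  refine Integrable.of_integral_ne_zero ?_
  rw [integral_exp_neg_sq_norm_div_two]
  positivity

lemma stdGaussian_closedBall {d : ℕ} (hd : 1 ≤ d) {R : ℝ} (hR : 0 ≤ R) :
    stdGaussian d (closedBall 0 R)
      = ENNReal.ofReal (lowerIncGamma ((d : ℝ) / 2) (R ^ 2 / 2) / Gamma ((d : ℝ) / 2)) := by
  have : Nonempty (Fin d) := ⟨⟨0, hd⟩⟩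
  have hdensity : Continuous fun z : E d => (2 * π) ^ (-(d : ℝ) / 2) * exp (-‖z‖ ^ 2 / 2) := by
    fun_prop
  rw [stdGaussian, withDensity_apply _ measurableSet_closedBall,
    ← ofReal_integral_eq_lintegral_ofReal
      (hdensity.continuousOn.integrableOn_compact (isCompact_closedBall _ _))
      (.of_forall fun _ => by positivity),
    setIntegral_closedBall_fun_norm volume (fun y => (2 * π) ^ (-(d : ℝ) / 2) * exp (-y ^ 2 / 2))]
  have hradial : ∀ y ∈ Ioc (0 : ℝ) R,
      y ^ (d - 1) • ((2 * π) ^ (-(d : ℝ) / 2) * exp (-y ^ 2 / 2))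
        = (2 * π) ^ (-(d : ℝ) / 2) * (y ^ (2 * ((d : ℝ) / 2) - 1) * exp (-y ^ 2 / 2)) := by
    intro y _
    rw [smul_eq_mul, ← rpow_natCast, Nat.cast_sub hd, Nat.cast_one, mul_div_cancel₀ _ two_ne_zero]
    ring
  rw [finrank_euclideanSpace_fin, setIntegral_congr_fun measurableSet_Ioc hradial,
    integral_const_mul, setIntegral_Ioc_rpow_mul_exp_neg_sq_div_two _ hR, nsmul_eq_mul,
    smul_eq_mul, div_eq_mul_inv (lowerIncGamma _ _), ← two_pi_rpow_mul_volume_ball_mul_eq_inv_Gamma hd]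
  congr 1
  ring

lemma abs_toReal_sub_le_tvDist {Ω : Type*} [MeasurableSpace Ω] (P Q : Measure Ω)
    [IsFiniteMeasure P] [IsFiniteMeasure Q] {A : Set Ω} (hA : MeasurableSet A) :
    |(P A).toReal - (Q A).toReal| ≤ tvDist P Q := by
  refine le_ciSup (f := fun s : {s : Set Ω // MeasurableSet s} => |(P s).toReal - (Q s).toReal|)
    ⟨P.real univ + Q.real univ, ?_⟩ ⟨A, hA⟩
  rintro _ ⟨s, rfl⟩
  calc |(P s).toReal - (Q s).toReal| ≤ (P s).toReal + (Q s).toReal :=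
        abs_sub_le_iff.2 ⟨by linarith [ENNReal.toReal_nonneg (a := Q s)],
          by linarith [ENNReal.toReal_nonneg (a := P s)]⟩
    _ ≤ P.real univ + Q.real univ :=
        add_le_add (measureReal_mono (subset_univ _)) (measureReal_mono (subset_univ _))

lemma closedBall_subset_image_closedBall {X Y : Type*} [PseudoMetricSpace X] [PseudoMetricSpace Y]
    {F : X → Y} {G : Y → X} (hFG : Function.LeftInverse F G) {L : ℝ} (hL : 0 ≤ L)
    (hG : ∀ y₁ y₂, dist (G y₁) (G y₂) ≤ L * dist y₁ y₂) (y : Y) (r : ℝ) :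
    closedBall y r ⊆ F '' closedBall (G y) (L * r) := fun z hz =>
  ⟨G z, (hG z y).trans (mul_le_mul_of_nonneg_left hz hL), hFG z⟩

theorem stmt15_general (d : ℕ) (hd : 1 ≤ d) (F Finv : E d → E d) (L₂ D : ℝ) (hL₂ : 0 < L₂) (hD : 0 < D)
    (hinv₂ : ∀ z, F (Finv z) = z)
    (hFinv : ∀ z₁ z₂, ‖Finv z₁ - Finv z₂‖ ≤ L₂ * ‖z₁ - z₂‖)
    (Pstar : Measure (E d)) [IsProbabilityMeasure Pstar]
    (hzero : Pstar (closedBall (Finv 0) D) = 0)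
    (Phat : Measure (E d)) (hPhat : ∀ A : Set (E d), MeasurableSet A → Phat A = stdGaussian d (F '' A)) :
    tvDist Pstar Phat ≥
      lowerIncGamma ((d : ℝ) / 2) (D ^ 2 / (2 * L₂ ^ 2)) / Real.Gamma ((d : ℝ) / 2) := by
  have : IsFiniteMeasure Phat := ⟨by rw [hPhat _ .univ]; exact measure_lt_top _ _⟩
  set A := closedBall (Finv 0) D
  have hball : closedBall 0 (D / L₂) ⊆ F '' A := by
    simpa [mul_div_cancel₀ _ hL₂.ne'] using closedBall_subset_image_closedBall hinv₂ hL₂.le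
      (by simpa only [dist_eq_norm] using hFinv) 0 (D / L₂)
  have hmass : ENNReal.ofReal (lowerIncGamma ((d : ℝ) / 2) (D ^ 2 / (2 * L₂ ^ 2)) /
      Gamma ((d : ℝ) / 2)) ≤ Phat A := by
    rw [hPhat A measurableSet_closedBall, show D ^ 2 / (2 * L₂ ^ 2) = (D / L₂) ^ 2 / 2 by ring,
      ← stdGaussian_closedBall hd (by positivity)]
    exact measure_mono hball
  calc _ ≤ (Phat A).toReal := (ENNReal.ofReal_le_iff_le_toReal (measure_ne_top _ _)).1 hmass
    _ = |(Pstar A).toReal - (Phat A).toReal| := by simp [hzero]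
    _ ≤ tvDist Pstar Phat := abs_toReal_sub_le_tvDist _ _ measurableSet_closedBall

theorem stmt15 (d : ℕ) (hd : 1 ≤ d) (F Finv : E d → E d) (L₂ D : ℝ) (hL₂ : 0 < L₂) (hD : 0 < D)
    (hbij : Function.Bijective F)
    (hinv₁ : ∀ x, Finv (F x) = x) (hinv₂ : ∀ z, F (Finv z) = z)
    (hFinv : ∀ z₁ z₂, ‖Finv z₁ - Finv z₂‖ ≤ L₂ * ‖z₁ - z₂‖)
    (M₁ M₂ : Set (E d)) (hsep : ∀ x ∈ M₁, ∀ y ∈ M₂, 2 * D ≤ dist x y)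
    (Pstar : Measure (E d)) [IsProbabilityMeasure Pstar]
    (hsupp : Pstar (M₁ ∪ M₂)ᶜ = 0)
    (hzero : Pstar (closedBall (Finv 0) D) = 0)
    (Phat : Measure (E d)) (hPhat : ∀ A : Set (E d), MeasurableSet A → Phat A = stdGaussian d (F '' A)) :
    tvDist Pstar Phat ≥
      lowerIncGamma ((d : ℝ) / 2) (D ^ 2 / (2 * L₂ ^ 2)) / Real.Gamma ((d : ℝ) / 2) :=
  stmt15_general d hd F Finv L₂ D hL₂ hD hinv₂ hFinv Pstar hzero Phat hPhat
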